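/- arXiv:0704.3825 — 3 statements merged into one kernel-verified Lean document; each statement's English description precedes it below -/
import Mathlib

section
/- Let ε > 0 and let α, β : ℝ → ℍ be complete geodesics in the hyperbolic plane that cross transversely (Set.range α ≠ Set.range β and Set.range α ∩ Set.range β ≠ ∅). Let I = {t | dist(α(t), Set.range β) ≤ 2ε} and J = {t | dist(β(t), Set.range α) ≤ 2ε}. Then the diameters of I and J (as subsets of ℝ) differ by at most 4ε: |diam I − diam J| ≤ 4ε. -/
/-!
Every point `α t` of the trap interval of `α` has a nearest point `β s` on the (closed) geodesic
`β`, at distance at most `2ε`, and `s` then lies in the trap interval of `β`. The triangle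
inequality `|x - y| = d(α x, α y) ≤ d(α x, β s) + |s - s'| + d(β s', α y)` therefore shows that
each trap interval is at most `4ε` longer than the other one. Boundedness also transfers from one
trap interval to the other, so when they are unbounded both diameters are `0`.
-/

open Metric Set

section TrapSet

variable {X : Type*} [MetricSpace X]

def trapSet (α β : ℝ → X) (r : ℝ) : Set ℝ := {t | infDist (α t) (range β) ≤ r}

theorem exists_mem_trapSet_swap [ProperSpace X] {α β : ℝ → X} (hβ : Isometry β) {r t : ℝ}
    (ht : t ∈ trapSet α β r) : ∃ s ∈ trapSet β α r, dist (α t) (β s) ≤ r := by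
  obtain ⟨_, ⟨s, rfl⟩, hs⟩ :=
    hβ.isClosedEmbedding.isClosed_range.exists_infDist_eq_dist (range_nonempty β) (α t)
  have hdist : dist (α t) (β s) ≤ r := hs ▸ ht
  refine ⟨s, ?_, hdist⟩
  calc infDist (β s) (range α) ≤ dist (β s) (α t) := infDist_le_dist_of_mem (mem_range_self t)
    _ ≤ r := dist_comm (α t) (β s) ▸ hdist

variable [ProperSpace X] {α β : ℝ → X} {r : ℝ}

theorem exists_dist_le_of_mem_trapSet (hα : Isometry α) (hβ : Isometry β) {x y : ℝ}
    (hx : x ∈ trapSet α β r) (hy : y ∈ trapSet α β r) :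
    ∃ s ∈ trapSet β α r, ∃ s' ∈ trapSet β α r, dist x y ≤ dist s s' + 2 * r := by
  obtain ⟨s, hs, hxs⟩ := exists_mem_trapSet_swap hβ hx
  obtain ⟨s', hs', hys'⟩ := exists_mem_trapSet_swap hβ hy
  refine ⟨s, hs, s', hs', ?_⟩
  calc dist x y = dist (α x) (α y) := (hα.dist_eq x y).symm
    _ ≤ dist (α x) (β s) + dist (β s) (β s') + dist (β s') (α y) := dist_triangle4 _ _ _ _
    _ = dist (α x) (β s) + dist s s' + dist (α y) (β s') := by rw [hβ.dist_eq, dist_comm (β s')]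
    _ ≤ dist s s' + 2 * r := by linarith

theorem isBounded_trapSet_of_swap (hα : Isometry α) (hβ : Isometry β)
    (hb : Bornology.IsBounded (trapSet β α r)) : Bornology.IsBounded (trapSet α β r) := by
  obtain ⟨C, hC⟩ := isBounded_iff.1 hb
  refine isBounded_iff.2 ⟨C + 2 * r, fun x hx y hy => ?_⟩
  obtain ⟨s, hs, s', hs', hxy⟩ := exists_dist_le_of_mem_trapSet hα hβ hx hy
  linarith [hC hs hs']

theorem diam_trapSet_le (hα : Isometry α) (hβ : Isometry β) (hr : 0 ≤ r)
    (hb : Bornology.IsBounded (trapSet β α r)) :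
    diam (trapSet α β r) ≤ diam (trapSet β α r) + 2 * r := by
  refine diam_le_of_forall_dist_le (by positivity) fun x hx y hy => ?_
  obtain ⟨s, hs, s', hs', hxy⟩ := exists_dist_le_of_mem_trapSet hα hβ hx hy
  linarith [dist_le_diam_of_mem hb hs hs']

theorem abs_diam_trapSet_sub_diam_trapSet_le (hα : Isometry α) (hβ : Isometry β) (hr : 0 ≤ r) :
    |diam (trapSet α β r) - diam (trapSet β α r)| ≤ 2 * r := by
  by_cases hb : Bornology.IsBounded (trapSet β α r)
  · have hb' := isBounded_trapSet_of_swap hα hβ hb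
    have := diam_trapSet_le hα hβ hr hb
    have := diam_trapSet_le hβ hα hr hb'
    exact abs_sub_le_iff.2 ⟨by linarith, by linarith⟩
  · have hb' : ¬Bornology.IsBounded (trapSet α β r) := mt (isBounded_trapSet_of_swap hβ hα) hb
    rw [diam_eq_zero_of_unbounded hb, diam_eq_zero_of_unbounded hb', sub_zero, abs_zero]
    positivity

end TrapSet

theorem trap_intervals_diam_close_general
    (ε : ℝ) (hε : 0 < ε)
    (α β : ℝ → UpperHalfPlane)
    (hα : ∀ s t : ℝ, dist (α s) (α t) = |s - t|)
    (hβ : ∀ s t : ℝ, dist (β s) (β t) = |s - t|) :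
    |Metric.diam {t : ℝ | Metric.infDist (α t) (Set.range β) ≤ 2 * ε} -
        Metric.diam {t : ℝ | Metric.infDist (β t) (Set.range α) ≤ 2 * ε}| ≤ 4 * ε := by
  have key := abs_diam_trapSet_sub_diam_trapSet_le (r := 2 * ε)
    (Isometry.of_dist_eq hα) (Isometry.of_dist_eq hβ) (by positivity)
  exact key.trans_eq (by ring)

theorem trap_intervals_diam_close
    (ε : ℝ) (hε : 0 < ε)
    (α β : ℝ → UpperHalfPlane)
    (hα : ∀ s t : ℝ, dist (α s) (α t) = |s - t|)
    (hβ : ∀ s t : ℝ, dist (β s) (β t) = |s - t|)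
    (hne : Set.range α ≠ Set.range β)
    (hint : (Set.range α ∩ Set.range β).Nonempty) :
    |Metric.diam {t : ℝ | Metric.infDist (α t) (Set.range β) ≤ 2 * ε} -
        Metric.diam {t : ℝ | Metric.infDist (β t) (Set.range α) ≤ 2 * ε}| ≤ 4 * ε :=
  trap_intervals_diam_close_general ε hε α β hα hβ
end

section
/- Let ε > 0 and let Γ be a subgroup of the isometry group of the hyperbolic plane ℍ with systole greater than 8ε, i.e. dist(x, g·x) > 8ε for every x ∈ ℍ and every g ∈ Γ with g ≠ 1. Let α, β : ℝ → ℍ be complete geodesics that cross transversely (Set.range α ≠ Set.range β and Set.range α ∩ Set.range β ≠ ∅), let ℓ > 0, and suppose there exist a, b ∈ Γ with a·α(t) = α(t + ℓ) and b·β(t) = β(t + ℓ) for all t ∈ ℝ. Then for all s, t ∈ ℝ with dist(α(s), Set.range β) ≤ 2ε and dist(α(t), Set.range β) ≤ 2ε, one has |s − t| < ℓ + 4ε. -/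
/-!
In the hyperboloid model `Φ : ℍ → ℝ³`, a unit-speed geodesic satisfies
`Φ (γ (u + δ)) + Φ (γ (u - δ)) = 2 cosh δ • Φ (γ u)` (the midpoint of a segment is unique), so
`Φ ∘ γ = eᵗ P + e⁻ᵗ V`, and `cosh (dist (α v) (β w))` is a combination of `e^{±v ± w}`.
Minimising over `w` gives `cosh² (infDist (α v) β)` as a nonnegative combination of `e^{2v}`,
`e^{-2v}` and `1`, a convex function of `v`: the times at which `α` is `2ε`-close to `β` form an
interval. If it had length at least `ℓ + 4ε`, both `α s` and `a (α s) = α (s + ℓ)` would be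
`2ε`-close to `β`, and comparing their feet on `β` shows that `a` and `b` or `b⁻¹` move `α s`
less than `8ε` apart. The systole forces `a = b^{±1}`, and then `α` and `β` share the two points
`α u` and `α (u + ℓ)`, so they coincide.
-/

open Real Set Filter Topology Metric

section CoshFunctionalEquation

variable {E : Type*} [AddCommGroup E] [Module ℝ E]

noncomputable def expComb (c₁ c₂ : E) (x : ℝ) : E :=
  exp x • c₁ + exp (-x) • c₂

theorem expComb_swap (c₁ c₂ : E) (x : ℝ) : expComb c₂ c₁ x = expComb c₁ c₂ (-x) := by
  rw [expComb, expComb, neg_neg, add_comm]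

/- No continuity is needed: oddness and the equation with `u` and `δ` swapped give the addition
law `h (x + y) = cosh y • h x + cosh x • h y`, and expanding `h (x + 2a)` in two ways yields
`sinh a ^ 2 • h x = 0`. -/
theorem eq_zero_of_add_add_sub_eq_cosh_smul {h : ℝ → E}
    (hfe : ∀ u δ, h (u + δ) + h (u - δ) = (2 * cosh δ) • h u)
    (h₀ : h 0 = 0) {a : ℝ} (ha : a ≠ 0) (ha' : h a = 0) (x : ℝ) : h x = 0 := by
  have hodd : ∀ x, h (-x) = -h x := fun x => by
    have := hfe 0 x
    rw [h₀, smul_zero, zero_add, zero_sub] at this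
    exact eq_neg_of_add_eq_zero_right this
  have hadd : ∀ x y, h (x + y) = cosh y • h x + cosh x • h y := fun x y => by
    have h₁ := hfe x y
    have h₂ := hfe y x
    rw [show y - x = -(x - y) by ring, hodd, add_comm y x] at h₂
    apply smul_right_injective E (two_ne_zero (α := ℝ))
    linear_combination (norm := module) h₁ + h₂
  have h2a : h (a + a) = 0 := by rw [hadd, ha', smul_zero, add_zero]
  have key : (sinh a ^ 2) • h x = 0 := by
    have e₁ := hadd (x + a) a
    have e₂ := hadd x (a + a)
    rw [hadd x a, ha', smul_zero, smul_zero, add_zero, add_zero] at e₁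
    rw [← add_assoc, h2a, smul_zero, add_zero, cosh_add] at e₂
    linear_combination (norm := module) e₁ - e₂
  exact (smul_eq_zero.1 key).resolve_left (pow_ne_zero 2 (sinh_ne_zero.2 ha))

theorem exp_add_add_exp_sub (u δ : ℝ) : exp (u + δ) + exp (u - δ) = 2 * cosh δ * exp u := by
  rw [cosh_eq, exp_add, exp_sub, exp_neg]
  field_simp

theorem exists_eq_expComb {g : ℝ → E}
    (hfe : ∀ u δ, g (u + δ) + g (u - δ) = (2 * cosh δ) • g u) :
    ∃ c₁ c₂ : E, ∀ x, g x = expComb c₁ c₂ x := by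
  have hD : exp 1 - exp (-1) ≠ 0 := sub_ne_zero.2 (exp_injective.ne (by norm_num))
  set c₁ := (exp 1 - exp (-1))⁻¹ • (g 1 - exp (-1) • g 0)
  set c₂ := (exp 1 - exp (-1))⁻¹ • (exp 1 • g 0 - g 1)
  refine ⟨c₁, c₂, fun x => sub_eq_zero.1 <|
    eq_zero_of_add_add_sub_eq_cosh_smul (h := fun x => g x - (exp x • c₁ + exp (-x) • c₂))
      (fun u δ => ?_) ?_ one_ne_zero ?_ x⟩
  · have e₁ := exp_add_add_exp_sub u δ
    have e₂ := exp_add_add_exp_sub (-u) (-δ)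
    rw [cosh_neg, show -u + -δ = -(u + δ) by ring, show -u - -δ = -(u - δ) by ring] at e₂
    linear_combination (norm := module) hfe u δ - e₁ • c₁ - e₂ • c₂
  · simp only [c₁, c₂, exp_zero, neg_zero, one_smul]
    match_scalars <;> field_simp <;> ring
  · simp only [c₁, c₂]
    match_scalars <;> field_simp <;> ring

end CoshFunctionalEquation

section ExpComb

variable {c₁ c₂ : ℝ}

theorem expComb_real (c₁ c₂ x : ℝ) : expComb c₁ c₂ x = c₁ * exp x + c₂ * exp (-x) := by
  rw [expComb, smul_eq_mul, smul_eq_mul, mul_comm, mul_comm (exp _)]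

theorem nonneg_of_forall_expComb_nonneg (h : ∀ x, 0 ≤ expComb c₁ c₂ x) : 0 ≤ c₁ := by
  have hlim : Tendsto (fun x => c₁ + c₂ * exp (-(2 * x))) atTop (𝓝 c₁) := by
    simpa using tendsto_const_nhds.add <|
      (tendsto_exp_neg_atTop_nhds_zero.comp (tendsto_id.const_mul_atTop two_pos)).const_mul c₂
  refine ge_of_tendsto' hlim fun x => ?_
  have hmul := mul_nonneg (h x) (exp_pos (-x)).le
  rwa [expComb_real, add_mul, mul_assoc, mul_assoc, ← exp_add, ← exp_add, add_neg_cancel,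
    exp_zero, mul_one, show -x + -x = -(2 * x) by ring] at hmul

theorem pos_of_forall_one_le_expComb (h : ∀ x, 1 ≤ expComb c₁ c₂ x) : 0 < c₁ := by
  refine (nonneg_of_forall_expComb_nonneg fun x => zero_le_one.trans (h x)).lt_of_ne' fun h₀ => ?_
  have hlim : Tendsto (fun x => c₂ * exp (-x)) atTop (𝓝 0) := by
    simpa using tendsto_exp_neg_atTop_nhds_zero.const_mul c₂
  have : (1 : ℝ) ≤ 0 := ge_of_tendsto' hlim fun x => by simpa [expComb_real, h₀] using h x
  norm_num at this

theorem four_mul_le_expComb_sq (c₁ c₂ x : ℝ) : 4 * (c₁ * c₂) ≤ expComb c₁ c₂ x ^ 2 := by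
  have hinv : exp x * exp (-x) = 1 := by rw [← exp_add, add_neg_cancel, exp_zero]
  rw [expComb_real]
  nlinarith [sq_nonneg (c₁ * exp x - c₂ * exp (-x))]

theorem exists_expComb_sq_eq (h₁ : 0 < c₁) (h₂ : 0 < c₂) :
    ∃ x, expComb c₁ c₂ x ^ 2 = 4 * (c₁ * c₂) := by
  refine ⟨log (c₂ / c₁) / 2, ?_⟩
  have hsq : exp (log (c₂ / c₁) / 2) ^ 2 = c₂ / c₁ := by
    rw [← exp_nat_mul, Nat.cast_ofNat, mul_div_cancel₀ _ two_ne_zero, exp_log (by positivity)]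
  rw [expComb_real, exp_neg]
  field_simp
  rw [hsq]
  field_simp
  ring

theorem convexOn_expComb_mul_expComb {x₁ x₂ y₁ y₂ : ℝ} (hx₁ : 0 ≤ x₁) (hx₂ : 0 ≤ x₂)
    (hy₁ : 0 ≤ y₁) (hy₂ : 0 ≤ y₂) :
    ConvexOn ℝ univ fun v => expComb x₁ x₂ v * expComb y₁ y₂ v := by
  have hexp : ∀ c : ℝ, ConvexOn ℝ univ fun v => exp (c * v) := fun c =>
    convexOn_exp.comp_linearMap (LinearMap.mulLeft ℝ c)
  have hsum := (((hexp 2).smul (mul_nonneg hx₁ hy₁)).add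
    ((hexp (-2)).smul (mul_nonneg hx₂ hy₂))).add (convexOn_const (x₁ * y₂ + x₂ * y₁) convex_univ)
  refine hsum.congr fun v _ => ?_
  simp only [Pi.add_apply, smul_eq_mul, expComb_real]
  rw [show (2 : ℝ) * v = v + v by ring, show -2 * v = -v + -v by ring, exp_add, exp_add]
  have hinv : exp v * exp (-v) = 1 := by rw [← exp_add, add_neg_cancel, exp_zero]
  linear_combination (-(x₁ * y₂) - x₂ * y₁) * hinv

/- The minimum over `w` of `expComb c₁ c₂ w` is `2 √(c₁ c₂)`, and here the product of the two
coefficients is convex in `v`. -/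
theorem ordConnected_setOf_exists_expComb_le {x₁ x₂ y₁ y₂ : ℝ}
    (h : ∀ v w, 1 ≤ expComb (expComb x₁ x₂ v) (expComb y₁ y₂ v) w) (C : ℝ) :
    OrdConnected {v | ∃ w, expComb (expComb x₁ x₂ v) (expComb y₁ y₂ v) w ≤ C} := by
  have hx : ∀ v, 0 < expComb x₁ x₂ v := fun v => pos_of_forall_one_le_expComb (h v)
  have hy : ∀ v, 0 < expComb y₁ y₂ v := fun v =>
    pos_of_forall_one_le_expComb fun w => by rw [expComb_swap]; exact h v (-w)
  have hconv := convexOn_expComb_mul_expComb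
    (nonneg_of_forall_expComb_nonneg fun v => (hx v).le)
    (nonneg_of_forall_expComb_nonneg (c₂ := x₁) fun v => by rw [expComb_swap]; exact (hx _).le)
    (nonneg_of_forall_expComb_nonneg fun v => (hy v).le)
    (nonneg_of_forall_expComb_nonneg (c₂ := y₁) fun v => by rw [expComb_swap]; exact (hy _).le)
  refine ⟨fun s ⟨ws, hws⟩ t ⟨wt, hwt⟩ u hu => ?_⟩
  have hC : 0 ≤ C := zero_le_one.trans ((h s ws).trans hws)
  have hbound : ∀ v w, expComb (expComb x₁ x₂ v) (expComb y₁ y₂ v) w ≤ C →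
      v ∈ {v | v ∈ univ ∧ expComb x₁ x₂ v * expComb y₁ y₂ v ≤ C ^ 2 / 4} := fun v w hw => by
    have := (four_mul_le_expComb_sq _ _ w).trans (pow_le_pow_left₀ (zero_le_one.trans (h v w)) hw 2)
    exact ⟨mem_univ v, by linarith⟩
  obtain ⟨-, hu⟩ :=
    (hconv.convex_le (C ^ 2 / 4)).ordConnected.out (hbound s ws hws) (hbound t wt hwt) hu
  obtain ⟨w, hw⟩ := exists_expComb_sq_eq (hx u) (hy u)
  exact ⟨w, (sq_le_sq₀ (zero_le_one.trans (h u w)) hC).1 (by linarith)⟩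

end ExpComb

section IsometricTranslations

variable {X : Type*}

theorem Isometry.exists_infDist_range_eq_dist [MetricSpace X] [ProperSpace X] {β : ℝ → X}
    (hβ : Isometry β) (x : X) : ∃ w, infDist x (range β) = dist x (β w) := by
  obtain ⟨_, ⟨w, rfl⟩, hw⟩ :=
    hβ.isClosedEmbedding.isClosed_range.exists_infDist_eq_dist (range_nonempty β) x
  exact ⟨w, hw⟩

theorem eq_of_dist_apply_le_of_forall_lt_dist [PseudoMetricSpace X] {Γ : Subgroup (X ≃ᵢ X)}
    {r : ℝ} (hsys : ∀ x, ∀ g ∈ Γ, g ≠ 1 → r < dist x (g x)) {g h : X ≃ᵢ X} (hg : g ∈ Γ)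
    (hh : h ∈ Γ) {x : X} (hx : dist (g x) (h x) ≤ r) : g = h := by
  by_contra hgh
  have := hsys x (g⁻¹ * h) (mul_mem (inv_mem hg) hh) (by rwa [Ne, inv_mul_eq_one])
  rw [IsometryEquiv.mul_apply, ← g.dist_eq, g.apply_inv_self] at this
  linarith

variable [PseudoMetricSpace X] {β : ℝ → X} {b : X ≃ᵢ X} {ℓ : ℝ}

theorem IsometryEquiv.inv_apply_eq_sub (hb : ∀ t, b (β t) = β (t + ℓ)) (t : ℝ) :
    b⁻¹ (β t) = β (t - ℓ) :=
  b.symm_apply_eq.2 (by rw [hb, sub_add_cancel])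

theorem Isometry.dist_apply_le_or_dist_inv_apply_le (hβ : Isometry β)
    (hb : ∀ t, b (β t) = β (t + ℓ)) {x y : X} {δ w₁ w₂ : ℝ} (hxy : dist x y = ℓ)
    (hx : dist x (β w₁) ≤ δ) (hy : dist y (β w₂) ≤ δ) :
    dist y (b x) ≤ 4 * δ ∨ dist y (b⁻¹ x) ≤ 4 * δ := by
  have hbound : ∀ (c : X ≃ᵢ X) (m : ℝ), c (β w₁) = β (w₁ + m) →
      dist y (c x) ≤ 2 * δ + |w₂ - (w₁ + m)| := fun c m hc => by
    calc dist y (c x) ≤ dist y (β w₂) + dist (β w₂) (β (w₁ + m)) + dist (β (w₁ + m)) (c x) :=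
          dist_triangle4 _ _ _ _
      _ ≤ 2 * δ + |w₂ - (w₁ + m)| := by
        rw [← hc, c.dist_eq, hc, hβ.dist_eq, Real.dist_eq]
        linarith [dist_comm x (β w₁)]
  have hupper : dist (β w₁) (β w₂) ≤ ℓ + 2 * δ := by
    linarith [dist_triangle4 (β w₁) x y (β w₂), dist_comm x (β w₁)]
  have hlower : ℓ ≤ dist (β w₁) (β w₂) + 2 * δ := by
    linarith [dist_triangle4 x (β w₁) (β w₂) y, dist_comm y (β w₂)]
  rw [hβ.dist_eq, Real.dist_eq] at hupper hlower
  rcases le_total w₁ w₂ with h | h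
  · refine .inl ((hbound b ℓ (hb w₁)).trans ?_)
    rw [abs_of_nonpos (by linarith)] at hupper hlower
    linarith [abs_le.2 (⟨by linarith, by linarith⟩ : -(2 * δ) ≤ w₂ - (w₁ + ℓ) ∧ _)]
  · refine .inr ((hbound b⁻¹ (-ℓ) ?_).trans ?_)
    · rw [IsometryEquiv.inv_apply_eq_sub hb, sub_eq_add_neg]
    rw [abs_of_nonneg (by linarith)] at hupper hlower
    linarith [abs_le.2 (⟨by linarith, by linarith⟩ : -(2 * δ) ≤ w₂ - (w₁ + -ℓ) ∧ _)]

end IsometricTranslations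

noncomputable def minkowskiForm : LinearMap.BilinForm ℝ (ℝ × ℝ × ℝ) :=
  LinearMap.mk₂ ℝ (fun x y => x.1 * y.1 - x.2.1 * y.2.1 - x.2.2 * y.2.2)
    (fun _ _ _ => by simp only [Prod.fst_add, Prod.snd_add]; ring)
    (fun _ _ _ => by simp only [Prod.smul_fst, Prod.smul_snd, smul_eq_mul]; ring)
    (fun _ _ _ => by simp only [Prod.fst_add, Prod.snd_add]; ring)
    (fun _ _ _ => by simp only [Prod.smul_fst, Prod.smul_snd, smul_eq_mul]; ring)

theorem minkowskiForm_apply (x y : ℝ × ℝ × ℝ) :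
    minkowskiForm x y = x.1 * y.1 - x.2.1 * y.2.1 - x.2.2 * y.2.2 := rfl

theorem eq_zero_of_minkowskiForm_eq_zero {m w : ℝ × ℝ × ℝ} (hm : 0 < minkowskiForm m m)
    (hwm : minkowskiForm w m = 0) (hw : 0 ≤ minkowskiForm w w) : w = 0 := by
  obtain ⟨m₀, m₁, m₂⟩ := m
  obtain ⟨w₀, w₁, w₂⟩ := w
  simp only [minkowskiForm_apply] at hm hwm hw
  have hS : (w₁ ^ 2 + w₂ ^ 2) * (m₀ * m₀ - m₁ * m₁ - m₂ * m₂) ≤ 0 := by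
    have h₁ : (w₁ ^ 2 + w₂ ^ 2) * (m₀ * m₀) ≤ w₀ ^ 2 * (m₀ * m₀) :=
      mul_le_mul_of_nonneg_right (by linarith) (mul_self_nonneg _)
    have h₂ : (w₀ * m₀) ^ 2 = (w₁ * m₁ + w₂ * m₂) ^ 2 := by
      rw [show w₀ * m₀ = w₁ * m₁ + w₂ * m₂ by linarith]
    nlinarith [sq_nonneg (w₁ * m₂ - w₂ * m₁)]
  have hS0 : w₁ ^ 2 + w₂ ^ 2 ≤ 0 := nonpos_of_mul_nonpos_left hS hm
  have hw₁ : w₁ = 0 := by nlinarith [sq_nonneg w₁, sq_nonneg w₂]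
  have hw₂ : w₂ = 0 := by nlinarith [sq_nonneg w₁, sq_nonneg w₂]
  subst hw₁ hw₂
  have hm₀ : m₀ ≠ 0 := by rintro rfl; nlinarith [sq_nonneg m₁, sq_nonneg m₂]
  have hw₀ : w₀ = 0 := (mul_eq_zero.1 (by linarith : w₀ * m₀ = 0)).resolve_right hm₀
  simp [hw₀]

namespace UpperHalfPlane

/- The isometry onto the upper sheet of `x₀² - x₁² - x₂² = 1`, where `cosh` of the distance is
the Minkowski pairing. -/
noncomputable def toHyperboloid (z : ℍ) : ℝ × ℝ × ℝ :=
  ((z.re ^ 2 + z.im ^ 2 + 1) / (2 * z.im), (z.re ^ 2 + z.im ^ 2 - 1) / (2 * z.im), z.re / z.im)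

theorem cosh_dist_eq_minkowskiForm (z w : ℍ) :
    cosh (dist z w) = minkowskiForm (toHyperboloid z) (toHyperboloid w) := by
  have hz := z.im_pos
  have hw := w.im_pos
  rw [cosh_dist', minkowskiForm_apply, toHyperboloid, toHyperboloid]
  field_simp
  ring

theorem toHyperboloid_injective : Function.Injective toHyperboloid := by
  intro z w h
  have hz := z.im_pos
  have hw := w.im_pos
  simp only [toHyperboloid, Prod.mk.injEq] at h
  obtain ⟨h₀, h₁, h₂⟩ := h
  have him : z.im = w.im := by
    have e : (z.re ^ 2 + z.im ^ 2 + 1) / (2 * z.im) - (z.re ^ 2 + z.im ^ 2 - 1) / (2 * z.im) =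
        (w.re ^ 2 + w.im ^ 2 + 1) / (2 * w.im) - (w.re ^ 2 + w.im ^ 2 - 1) / (2 * w.im) := by
      rw [h₀, h₁]
    field_simp at e
    linarith
  rw [him, div_left_inj' hw.ne'] at h₂
  exact ext_re_im h₂ him

/- `Φ x + Φ y - 2 cosh r • Φ m` is null and Minkowski-orthogonal to the timelike `Φ m`. -/
theorem toHyperboloid_add_eq_of_dist_eq {x y m : ℍ} {r : ℝ} (hx : dist x m = r)
    (hy : dist y m = r) (hxy : dist x y = 2 * r) :
    toHyperboloid x + toHyperboloid y = (2 * cosh r) • toHyperboloid m := by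
  have hB : ∀ p q : ℍ, minkowskiForm (toHyperboloid p) (toHyperboloid q) = cosh (dist p q) :=
    fun p q => (cosh_dist_eq_minkowskiForm p q).symm
  rw [← sub_eq_zero]
  refine eq_zero_of_minkowskiForm_eq_zero (m := toHyperboloid m) ?_ ?_ (le_of_eq ?_)
  · rw [hB, dist_self, cosh_zero]
    exact one_pos
  · simp only [map_add, map_sub, map_smul, LinearMap.add_apply, LinearMap.sub_apply,
      LinearMap.smul_apply, smul_eq_mul, hB, dist_self, cosh_zero, hx, hy]
    ring
  · simp only [map_add, map_sub, map_smul, LinearMap.add_apply, LinearMap.sub_apply,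
      LinearMap.smul_apply, smul_eq_mul, hB, dist_self, cosh_zero]
    rw [dist_comm y x, dist_comm m x, dist_comm m y, hx, hy, hxy, cosh_two_mul, sinh_sq]
    ring

theorem _root_.Isometry.toHyperboloid_add_add_sub {γ : ℝ → ℍ} (hγ : Isometry γ) (u δ : ℝ) :
    toHyperboloid (γ (u + δ)) + toHyperboloid (γ (u - δ)) =
      (2 * cosh δ) • toHyperboloid (γ u) := by
  rw [← cosh_abs δ]
  apply toHyperboloid_add_eq_of_dist_eq <;> rw [hγ.dist_eq, Real.dist_eq]
  · rw [add_sub_cancel_left]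
  · rw [sub_sub_cancel_left, abs_neg]
  · rw [show u + δ - (u - δ) = 2 * δ by ring, abs_mul, abs_two]

theorem _root_.Isometry.exists_toHyperboloid_comp_eq_expComb {γ : ℝ → ℍ} (hγ : Isometry γ) :
    ∃ P V, ∀ u, toHyperboloid (γ u) = expComb P V u :=
  exists_eq_expComb hγ.toHyperboloid_add_add_sub

theorem _root_.Isometry.eq_of_eq_of_eq {γ δ : ℝ → ℍ} (hγ : Isometry γ) (hδ : Isometry δ)
    {p q : ℝ} (hpq : p ≠ q) (hp : γ p = δ p) (hq : γ q = δ q) : γ = δ := by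
  funext x
  apply toHyperboloid_injective
  rw [← sub_eq_zero, show x = p + (x - p) by ring]
  refine eq_zero_of_add_add_sub_eq_cosh_smul
    (h := fun t => toHyperboloid (γ (p + t)) - toHyperboloid (δ (p + t))) (fun u ε => ?_)
    (by simp [hp]) (sub_ne_zero.2 hpq.symm) (by simp [hq]) (x - p)
  have h₁ := hγ.toHyperboloid_add_add_sub (p + u) ε
  have h₂ := hδ.toHyperboloid_add_add_sub (p + u) ε
  rw [add_assoc, add_sub_assoc] at h₁ h₂
  rw [smul_sub, ← h₁, ← h₂]
  abel

theorem _root_.Isometry.range_eq_of_apply_eq_of_apply_eq {α β : ℝ → ℍ} (hα : Isometry α)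
    (hβ : Isometry β) {p q p' q' : ℝ} (hpq : p ≠ q) (hp : α p = β p') (hq : α q = β q') :
    range α = range β := by
  have hqp : q - p ≠ 0 := sub_ne_zero.2 hpq.symm
  set σ := (q' - p') / (q - p)
  have hσ : |σ| = 1 := by
    have h := hα.dist_eq q p
    rw [hp, hq, hβ.dist_eq, Real.dist_eq, Real.dist_eq] at h
    rw [abs_div, h, div_self (abs_ne_zero.2 hqp)]
  set φ : ℝ → ℝ := fun x => p' + σ * (x - p)
  have hφ : Isometry φ := Isometry.of_dist_eq fun x y => by
    rw [Real.dist_eq, Real.dist_eq, show φ x - φ y = σ * (x - y) by ring, abs_mul, hσ, one_mul]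
  have hφ_surj : Function.Surjective φ := fun y =>
    ⟨p + (y - p') / σ, by simp only [φ]; field_simp [abs_ne_zero.1 (hσ ▸ one_ne_zero)]; ring⟩
  have hαφ : α = β ∘ φ := hα.eq_of_eq_of_eq (hβ.comp hφ) hpq (by simp [φ, hp])
    (by simp only [Function.comp, φ, σ, div_mul_cancel₀ _ hqp, add_sub_cancel, hq])
  rw [hαφ, hφ_surj.range_comp]

theorem _root_.Isometry.range_eq_of_translate {α β : ℝ → ℍ} (hα : Isometry α) (hβ : Isometry β)
    {a : ℍ → ℍ} {ℓ m : ℝ} (hℓ : ℓ ≠ 0) (haα : ∀ t, a (α t) = α (t + ℓ))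
    (haβ : ∀ t, a (β t) = β (t + m)) (hint : (range α ∩ range β).Nonempty) :
    range α = range β := by
  obtain ⟨_, ⟨u, rfl⟩, v, hv⟩ := hint
  exact hα.range_eq_of_apply_eq_of_apply_eq hβ (q := u + ℓ) (fun h => hℓ (by linarith)) hv.symm
    (by rw [← haα, ← hv, haβ])

theorem _root_.Isometry.exists_cosh_dist_eq_expComb {α β : ℝ → ℍ} (hα : Isometry α)
    (hβ : Isometry β) : ∃ x₁ x₂ y₁ y₂ : ℝ, ∀ v w,
      cosh (dist (α v) (β w)) = expComb (expComb x₁ x₂ v) (expComb y₁ y₂ v) w := by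
  obtain ⟨P, V, hP⟩ := hα.exists_toHyperboloid_comp_eq_expComb
  obtain ⟨Q, W, hQ⟩ := hβ.exists_toHyperboloid_comp_eq_expComb
  refine ⟨minkowskiForm P Q, minkowskiForm V Q, minkowskiForm P W, minkowskiForm V W,
    fun v w => ?_⟩
  rw [cosh_dist_eq_minkowskiForm, hP, hQ]
  simp only [expComb, map_add, map_smul, LinearMap.add_apply, LinearMap.smul_apply, smul_eq_mul]

theorem _root_.Isometry.ordConnected_setOf_infDist_le {α β : ℝ → ℍ} (hα : Isometry α)
    (hβ : Isometry β) (r : ℝ) : OrdConnected {v | infDist (α v) (range β) ≤ r} := by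
  obtain ⟨x₁, x₂, y₁, y₂, h⟩ := hα.exists_cosh_dist_eq_expComb hβ
  have htube := ordConnected_setOf_exists_expComb_le (fun v w => h v w ▸ one_le_cosh _) (cosh r)
  refine ⟨fun s hs t ht u hu => ?_⟩
  have hr : 0 ≤ r := infDist_nonneg.trans hs
  have key : ∀ v, infDist (α v) (range β) ≤ r ↔
      ∃ w, expComb (expComb x₁ x₂ v) (expComb y₁ y₂ v) w ≤ cosh r := fun v => by
    obtain ⟨w₀, hw₀⟩ := hβ.exists_infDist_range_eq_dist (α v)
    simp_rw [← h, cosh_le_cosh, abs_of_nonneg dist_nonneg, abs_of_nonneg hr]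
    exact ⟨fun hle => ⟨w₀, hw₀ ▸ hle⟩,
      fun ⟨w, hw⟩ => (infDist_le_dist_of_mem (mem_range_self w)).trans hw⟩
  exact (key u).2 (htube.out ((key s).1 hs) ((key t).1 ht) hu)

end UpperHalfPlane

open UpperHalfPlane

theorem trap_length_bound_general
    (ε : ℝ)
    (Γ : Subgroup (UpperHalfPlane ≃ᵢ UpperHalfPlane))
    (hsys : ∀ (x : UpperHalfPlane), ∀ g ∈ Γ, g ≠ 1 → 8 * ε < dist x (g x))
    (α β : ℝ → UpperHalfPlane)
    (hα : ∀ s t : ℝ, dist (α s) (α t) = |s - t|)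
    (hβ : ∀ s t : ℝ, dist (β s) (β t) = |s - t|)
    (hne : Set.range α ≠ Set.range β)
    (hint : (Set.range α ∩ Set.range β).Nonempty)
    (ℓ : ℝ) (hℓ : 0 < ℓ)
    (a : UpperHalfPlane ≃ᵢ UpperHalfPlane) (ha : a ∈ Γ)
    (haα : ∀ t : ℝ, a (α t) = α (t + ℓ))
    (b : UpperHalfPlane ≃ᵢ UpperHalfPlane) (hb : b ∈ Γ)
    (hbβ : ∀ t : ℝ, b (β t) = β (t + ℓ)) :
    ∀ s t : ℝ, Metric.infDist (α s) (Set.range β) ≤ 2 * ε →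
      Metric.infDist (α t) (Set.range β) ≤ 2 * ε →
      |s - t| < ℓ + 4 * ε := by
  have hα' : Isometry α := Isometry.of_dist_eq fun s t => by rw [hα, Real.dist_eq]
  have hβ' : Isometry β := Isometry.of_dist_eq fun s t => by rw [hβ, Real.dist_eq]
  have hfar : ∀ c ∈ Γ, ∀ m, (∀ t, c (β t) = β (t + m)) → ∀ x, 8 * ε < dist (a x) (c x) :=
    fun c hc m hcβ x => lt_of_not_ge fun hx => hne <| hα'.range_eq_of_translate hβ' hℓ.ne' haα
      (eq_of_dist_apply_le_of_forall_lt_dist hsys ha hc hx ▸ hcβ) hint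
  intro s t hs ht
  wlog hst : s ≤ t generalizing s t
  · rw [abs_sub_comm]
    exact this t s ht hs (le_of_not_ge hst)
  by_contra! hlong
  rw [abs_sub_comm, abs_of_nonneg (sub_nonneg.2 hst)] at hlong
  have hε : 0 ≤ ε := by linarith [infDist_nonneg.trans hs]
  have hsℓ : infDist (α (s + ℓ)) (range β) ≤ 2 * ε :=
    (hα'.ordConnected_setOf_infDist_le hβ' _).out hs ht ⟨by linarith, by linarith⟩
  obtain ⟨w₁, hw₁⟩ := hβ'.exists_infDist_range_eq_dist (α s)
  obtain ⟨w₂, hw₂⟩ := hβ'.exists_infDist_range_eq_dist (α (s + ℓ))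
  have hℓ_dist : dist (α s) (α (s + ℓ)) = ℓ := by
    rw [hα, sub_add_cancel_left, abs_neg, abs_of_pos hℓ]
  have hclose := hβ'.dist_apply_le_or_dist_inv_apply_le hbβ hℓ_dist (hw₁ ▸ hs) (hw₂ ▸ hsℓ)
  rw [← haα] at hclose
  rcases hclose with h | h
  · linarith [hfar b hb ℓ hbβ (α s)]
  · linarith [hfar b⁻¹ (inv_mem hb) (-ℓ)
      (fun t => by rw [IsometryEquiv.inv_apply_eq_sub hbβ, sub_eq_add_neg]) (α s)]

theorem trap_length_bound
    (ε : ℝ) (hε : 0 < ε)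
    (Γ : Subgroup (UpperHalfPlane ≃ᵢ UpperHalfPlane))
    (hsys : ∀ (x : UpperHalfPlane), ∀ g ∈ Γ, g ≠ 1 → 8 * ε < dist x (g x))
    (α β : ℝ → UpperHalfPlane)
    (hα : ∀ s t : ℝ, dist (α s) (α t) = |s - t|)
    (hβ : ∀ s t : ℝ, dist (β s) (β t) = |s - t|)
    (hne : Set.range α ≠ Set.range β)
    (hint : (Set.range α ∩ Set.range β).Nonempty)
    (ℓ : ℝ) (hℓ : 0 < ℓ)
    (a : UpperHalfPlane ≃ᵢ UpperHalfPlane) (ha : a ∈ Γ)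
    (haα : ∀ t : ℝ, a (α t) = α (t + ℓ))
    (b : UpperHalfPlane ≃ᵢ UpperHalfPlane) (hb : b ∈ Γ)
    (hbβ : ∀ t : ℝ, b (β t) = β (t + ℓ)) :
    ∀ s t : ℝ, Metric.infDist (α s) (Set.range β) ≤ 2 * ε →
      Metric.infDist (α t) (Set.range β) ≤ 2 * ε →
      |s - t| < ℓ + 4 * ε :=
  trap_length_bound_general ε Γ hsys α β hα hβ hne hint ℓ hℓ a ha haα b hb hbβ
end

section
/- For any two distinct points x, y of the hyperbolic plane ℍ there exists a complete geodesic through them: an isometric embedding γ : ℝ → ℍ with γ(0) = x and γ(dist(x, y)) = y. Moreover this geodesic is unique up to reparametrization: if γ₁, γ₂ : ℝ → ℍ are complete geodesics whose images both contain x and y, then Set.range γ₁ = Set.range γ₂. -/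
/-!
Any two points of `ℍ` lie on a vertical line or on a semicircle orthogonal to `ℝ`, and an element
of `SL(2, ℝ)` moves that curve onto the imaginary axis. The axis, parametrised by `t ↦ i eᵗ`, is a
geodesic, and it is rigid: by the formula for `cosh` of the hyperbolic distance, a point at
distances `|a - t|` and `|b - t|` from `i eᵃ` and `i eᵇ` (with `a ≠ b`) must be `i eᵗ`. Rigidity
survives isometries, and it forces every geodesic through two points of a rigid line to be an
affine reparametrisation of that line, hence to have the same image.
-/

open UpperHalfPlane Real
open scoped MatrixGroups

section MetricSpace

variable {X : Type*} [MetricSpace X]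

def IsRigidLine (γ : ℝ → X) : Prop :=
  ∀ ⦃a b t : ℝ⦄ ⦃z : X⦄, a ≠ b → dist (γ a) z = |a - t| → dist (γ b) z = |b - t| → z = γ t

theorem isometry_iff_dist_eq_abs {γ : ℝ → X} :
    Isometry γ ↔ ∀ s t, dist (γ s) (γ t) = |s - t| := by
  simp only [isometry_iff_dist_eq, Real.dist_eq]

theorem isometry_add_mul {ε : ℝ} (hε : |ε| = 1) (c : ℝ) : Isometry fun t : ℝ => c + ε * t :=
  isometry_iff_dist_eq_abs.2 fun s t => by
    rw [Real.dist_eq, add_sub_add_left_eq_sub, ← mul_sub, abs_mul, hε, one_mul]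

theorem IsRigidLine.comp_isometryEquiv {γ : ℝ → X} (hγ : IsRigidLine γ) (Φ : X ≃ᵢ X) :
    IsRigidLine (Φ ∘ γ) := by
  intro a b t z hab ha hb
  rw [Function.comp_apply, ← Φ.apply_symm_apply z, Φ.dist_eq] at ha hb
  rw [Function.comp_apply, ← hγ hab ha hb, Φ.apply_symm_apply]

theorem Isometry.exists_isometry_apply_zero_apply_dist {γ : ℝ → X} (hγ : Isometry γ)
    {a b : ℝ} {x y : X} (hx : γ a = x) (hy : γ b = y) :
    ∃ σ : ℝ → X, Isometry σ ∧ σ 0 = x ∧ σ (dist x y) = y := by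
  subst hx hy
  set ε : ℝ := if a ≤ b then 1 else -1 with hε_def
  have hε : |ε| = 1 := by rw [hε_def]; split_ifs <;> simp
  refine ⟨γ ∘ fun t => a + ε * t, hγ.comp (isometry_add_mul hε a), by simp, ?_⟩
  rw [hγ.dist_eq, Real.dist_eq, Function.comp_apply]
  congr 1
  by_cases hab : a ≤ b
  · simp [ε, hab, abs_of_nonpos (sub_nonpos.2 hab)]
  · simp [ε, hab, abs_of_pos (sub_pos.2 (not_le.1 hab))]

theorem IsRigidLine.range_eq {γ σ : ℝ → X} (hrig : IsRigidLine γ) (hγ : Isometry γ)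
    (hσ : Isometry σ) {a b s₁ s₂ : ℝ} (hab : a ≠ b) (h₁ : σ s₁ = γ a) (h₂ : σ s₂ = γ b) :
    Set.range σ = Set.range γ := by
  have hs : |s₁ - s₂| = |a - b| := by
    rw [← Real.dist_eq, ← Real.dist_eq, ← hσ.dist_eq, ← hγ.dist_eq, h₁, h₂]
  have hs₁₂ : s₁ - s₂ ≠ 0 := by
    rw [← abs_ne_zero, hs, abs_ne_zero, sub_ne_zero]; exact hab
  set ε := (a - b) / (s₁ - s₂)
  have hε : |ε| = 1 := by rw [abs_div, hs, div_self (abs_ne_zero.2 (sub_ne_zero.2 hab))]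
  have hεs : ε * (s₁ - s₂) = a - b := div_mul_cancel₀ _ hs₁₂
  have hσγ : σ = γ ∘ fun t => (a - ε * s₁) + ε * t := by
    funext t
    refine hrig hab ?_ ?_
    · rw [← h₁, hσ.dist_eq, Real.dist_eq, show a - (a - ε * s₁ + ε * t) = ε * (s₁ - t) by ring,
        abs_mul, hε, one_mul]
    · rw [← h₂, hσ.dist_eq, Real.dist_eq,
        show b - (a - ε * s₁ + ε * t) = ε * (s₂ - t) by linear_combination hεs,
        abs_mul, hε, one_mul]
  have hsurj : Function.Surjective fun t => (a - ε * s₁) + ε * t := fun u =>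
    ⟨(u - (a - ε * s₁)) / ε, by field_simp [abs_ne_zero.1 (hε.trans_ne one_ne_zero)]; ring⟩
  rw [hσγ, hsurj.range_comp]

end MetricSpace

namespace UpperHalfPlane

noncomputable def imAxis (t : ℝ) : ℍ := mk ⟨0, exp t⟩ (exp_pos t)

@[simp] theorem re_imAxis (t : ℝ) : (imAxis t).re = 0 := rfl

@[simp] theorem im_imAxis (t : ℝ) : (imAxis t).im = exp t := rfl

theorem isometry_imAxis : Isometry imAxis := isometry_vertical_line 0

theorem eq_imAxis_log_im {z : ℍ} (hz : z.re = 0) : z = imAxis (log z.im) :=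
  UpperHalfPlane.ext (Complex.ext hz (exp_log z.im_pos).symm)

theorem exp_mul_normSq_eq_of_dist_imAxis {a t : ℝ} {z : ℍ} (h : dist (imAxis a) z = |a - t|) :
    exp t * (z.re ^ 2 + z.im ^ 2 + exp a ^ 2) = z.im * (exp t ^ 2 + exp a ^ 2) := by
  have hcosh := cosh_dist (imAxis a) z
  rw [h, cosh_abs, cosh_eq, Complex.dist_eq_re_im, sq_sqrt (by positivity)] at hcosh
  simp only [coe_re, coe_im, re_imAxis, im_imAxis, neg_sub, exp_sub] at hcosh
  field_simp at hcosh
  linear_combination -hcosh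

theorem isRigidLine_imAxis : IsRigidLine imAxis := by
  intro a b t z hab ha hb
  have hA := exp_mul_normSq_eq_of_dist_imAxis ha
  have hB := exp_mul_normSq_eq_of_dist_imAxis hb
  have hAB : exp a ^ 2 - exp b ^ 2 ≠ 0 := by
    rw [sub_ne_zero, Ne, sq_eq_sq₀ (exp_pos a).le (exp_pos b).le, exp_eq_exp]
    exact hab
  have him : z.im = exp t := by
    have : (exp a ^ 2 - exp b ^ 2) * (exp t - z.im) = 0 := by linear_combination hA - hB
    linarith [(mul_eq_zero.1 this).resolve_left hAB]
  have hre : z.re = 0 := by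
    have : exp t * z.re ^ 2 = 0 := by rw [him] at hA; linear_combination hA
    exact pow_eq_zero_iff two_ne_zero |>.1 ((mul_eq_zero.1 this).resolve_left (exp_pos t).ne')
  rw [eq_imAxis_log_im hre, him, log_exp]

theorem re_smul_SL (g : SL(2, ℝ)) (z : ℍ) :
    (g • z).re = ((g 0 0 * z.re + g 0 1) * (g 1 0 * z.re + g 1 1) + g 0 0 * g 1 0 * z.im ^ 2)
      / Complex.normSq (g 1 0 * (z : ℂ) + g 1 1) := by
  rw [← coe_re, coe_specialLinearGroup_apply, Complex.div_re, ← add_div]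
  congr 1
  simp only [Algebra.algebraMap_self, RingHom.id_apply, Complex.add_re, Complex.mul_re,
    Complex.add_im, Complex.mul_im, Complex.ofReal_re, Complex.ofReal_im, coe_re, coe_im]
  ring

theorem exists_SL2_re_smul_eq_zero_of_re_eq (r : ℝ) :
    ∃ g : SL(2, ℝ), ∀ z : ℍ, z.re = r → (g • z).re = 0 :=
  ⟨(⟨!![1, -r; 0, 1], by simp [Matrix.det_fin_two_of]⟩ : SL(2, ℝ)),
    fun z hz => (re_smul_SL _ z).trans (by simp [hz])⟩

theorem exists_SL2_re_smul_eq_zero_of_sq_add_sq_eq (c : ℝ) {ρ : ℝ} (hρ : 0 < ρ) :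
    ∃ g : SL(2, ℝ), ∀ z : ℍ, (z.re - c) ^ 2 + z.im ^ 2 = ρ ^ 2 → (g • z).re = 0 := by
  -- `z ↦ (z - (c - ρ)) / ((c + ρ) - z)`, normalised to determinant one, sends the endpoints
  -- `c ∓ ρ` of the semicircle to `0` and `∞`.
  set k : ℝ := (√(2 * ρ))⁻¹
  have hk : k ^ 2 * (2 * ρ) = 1 := by
    rw [inv_pow, sq_sqrt (by positivity), inv_mul_cancel₀ (by positivity)]
  refine ⟨(⟨!![k, -(k * (c - ρ)); -k, k * (c + ρ)], ?_⟩ : SL(2, ℝ)), fun z hz => ?_⟩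
  · simp only [Matrix.det_fin_two_of]
    linear_combination hk
  · refine (re_smul_SL _ z).trans ?_
    convert zero_div _
    simp only [Matrix.of_apply, Matrix.cons_val', Matrix.cons_val_zero, Matrix.cons_val_one,
      Matrix.empty_val', Matrix.cons_val_fin_one]
    linear_combination (-(k ^ 2)) * hz

theorem exists_SL2_re_smul_eq_zero (x y : ℍ) :
    ∃ g : SL(2, ℝ), (g • x).re = 0 ∧ (g • y).re = 0 := by
  rcases eq_or_ne x.re y.re with hre | hre
  · obtain ⟨g, hg⟩ := exists_SL2_re_smul_eq_zero_of_re_eq x.re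
    exact ⟨g, hg x rfl, hg y hre.symm⟩
  -- the centre of the semicircle through `x` and `y`: the point of `ℝ` equidistant from both
  set c := (x.re ^ 2 + x.im ^ 2 - y.re ^ 2 - y.im ^ 2) / (2 * (x.re - y.re))
  have hc : c * (2 * (x.re - y.re)) = x.re ^ 2 + x.im ^ 2 - y.re ^ 2 - y.im ^ 2 :=
    div_mul_cancel₀ _ (mul_ne_zero two_ne_zero (sub_ne_zero.2 hre))
  set ρ := √((x.re - c) ^ 2 + x.im ^ 2)
  have hx : (x.re - c) ^ 2 + x.im ^ 2 = ρ ^ 2 := (sq_sqrt (by positivity)).symm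
  have hy : (y.re - c) ^ 2 + y.im ^ 2 = ρ ^ 2 := by linear_combination hx + hc
  have hρ : 0 < ρ := sqrt_pos.2 (by positivity)
  obtain ⟨g, hg⟩ := exists_SL2_re_smul_eq_zero_of_sq_add_sq_eq c hρ
  exact ⟨g, hg x hx, hg y hy⟩

theorem exists_isometry_isRigidLine_through (x y : ℍ) :
    ∃ γ : ℝ → ℍ, Isometry γ ∧ IsRigidLine γ ∧ ∃ a b : ℝ, γ a = x ∧ γ b = y := by
  obtain ⟨g, hx, hy⟩ := exists_SL2_re_smul_eq_zero x y
  set Φ : ℍ ≃ᵢ ℍ := (IsometryEquiv.constSMul g).symm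
  refine ⟨Φ ∘ imAxis, Φ.isometry.comp isometry_imAxis, isRigidLine_imAxis.comp_isometryEquiv Φ,
    log (g • x).im, log (g • y).im, ?_, ?_⟩
  · rw [Function.comp_apply, ← eq_imAxis_log_im hx]
    exact Φ.apply_symm_apply x
  · rw [Function.comp_apply, ← eq_imAxis_log_im hy]
    exact Φ.apply_symm_apply y

end UpperHalfPlane

theorem geodesic_through_two_points_exists_unique
    (x y : UpperHalfPlane) (hxy : x ≠ y) :
    (∃ γ : ℝ → UpperHalfPlane,
      (∀ s t : ℝ, dist (γ s) (γ t) = |s - t|) ∧ γ 0 = x ∧ γ (dist x y) = y) ∧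
    ∀ γ₁ γ₂ : ℝ → UpperHalfPlane,
      (∀ s t : ℝ, dist (γ₁ s) (γ₁ t) = |s - t|) →
      (∀ s t : ℝ, dist (γ₂ s) (γ₂ t) = |s - t|) →
      x ∈ Set.range γ₁ → y ∈ Set.range γ₁ →
      x ∈ Set.range γ₂ → y ∈ Set.range γ₂ →
      Set.range γ₁ = Set.range γ₂ := by
  obtain ⟨γ, hγ, hrig, a, b, hx, hy⟩ := exists_isometry_isRigidLine_through x y
  refine ⟨?_, ?_⟩
  · obtain ⟨σ, hσ, h0, hd⟩ := hγ.exists_isometry_apply_zero_apply_dist hx hy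
    exact ⟨σ, isometry_iff_dist_eq_abs.1 hσ, h0, hd⟩
  · have hab : a ≠ b := by rintro rfl; exact hxy (hx.symm.trans hy)
    rintro γ₁ γ₂ h₁ h₂ ⟨s₁, hs₁⟩ ⟨s₂, hs₂⟩ ⟨t₁, ht₁⟩ ⟨t₂, ht₂⟩
    rw [hrig.range_eq hγ (isometry_iff_dist_eq_abs.2 h₁) hab (hs₁.trans hx.symm)
        (hs₂.trans hy.symm),
      hrig.range_eq hγ (isometry_iff_dist_eq_abs.2 h₂) hab (ht₁.trans hx.symm) (ht₂.trans hy.symm)]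
end
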